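/- Let F, H : [0,1]²→[0,1] be binary operations such that F(x, H(u,v)) = H(F(x,u), F(x,v)) for all x, u, v ∈ [0,1]. Then for all fuzzy truth values f, g, h and every z ∈ [0,1], (f ⊙_F (g ⊙_H h))(z) ≤ ((f ⊙_F g) ⊙_H (f ⊙_F h))(z). -/

import Mathlib

open Set

/-- The extension of a binary operation `G` on `[0,1]` to fuzzy truth values:
`(f ⊙_G g)(z) = sup { min (f x) (g y) | x, y ∈ [0,1], G x y = z }` (with `sSup ∅ = 0` in `ℝ`). -/
noncomputable def extOp (G : ℝ → ℝ → ℝ) (f g : ℝ → ℝ) : ℝ → ℝ := fun z =>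
  sSup {r : ℝ | ∃ x ∈ Icc (0:ℝ) 1, ∃ y ∈ Icc (0:ℝ) 1, G x y = z ∧ r = min (f x) (g y)}

/-- A fuzzy truth value: a map of `[0,1]` into itself. -/
def IsFTV (f : ℝ → ℝ) : Prop := ∀ x ∈ Icc (0:ℝ) 1, f x ∈ Icc (0:ℝ) 1

/-- Convexity of a fuzzy truth value. -/
def ConvexFTV (f : ℝ → ℝ) : Prop :=
  ∀ x y z : ℝ, 0 ≤ x → x ≤ y → y ≤ z → z ≤ 1 → min (f x) (f z) ≤ f y

/-- `F` maps `[0,1]²` into `[0,1]`. -/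
def MapsI (F : ℝ → ℝ → ℝ) : Prop :=
  ∀ x ∈ Icc (0:ℝ) 1, ∀ y ∈ Icc (0:ℝ) 1, F x y ∈ Icc (0:ℝ) 1

/-- `F` is nondecreasing in each variable on `[0,1]²`. -/
def MonoI (F : ℝ → ℝ → ℝ) : Prop :=
  ∀ x₁ x₂ y₁ y₂ : ℝ, x₁ ∈ Icc (0:ℝ) 1 → x₂ ∈ Icc (0:ℝ) 1 → y₁ ∈ Icc (0:ℝ) 1 →
    y₂ ∈ Icc (0:ℝ) 1 → x₁ ≤ x₂ → y₁ ≤ y₂ → F x₁ y₁ ≤ F x₂ y₂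

/-- `F` is continuous on `[0,1]²`. -/
def ContI (F : ℝ → ℝ → ℝ) : Prop :=
  ContinuousOn (fun p : ℝ × ℝ => F p.1 p.2) (Icc (0:ℝ) 1 ×ˢ Icc (0:ℝ) 1)

/-- `F` is commutative on `[0,1]²`. -/
def CommI (F : ℝ → ℝ → ℝ) : Prop := ∀ x ∈ Icc (0:ℝ) 1, ∀ y ∈ Icc (0:ℝ) 1, F x y = F y x

/-- `F` is associative on `[0,1]`. -/
def AssocI (F : ℝ → ℝ → ℝ) : Prop :=
  ∀ x ∈ Icc (0:ℝ) 1, ∀ y ∈ Icc (0:ℝ) 1, ∀ z ∈ Icc (0:ℝ) 1, F (F x y) z = F x (F y z)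

/-
A witness `x`, `w = H u v` for the left side yields, by distributivity, the witness
`(F x u, F x v)` for the right side, whose degree is at least `min (f x) (min (g u) (h v))`.
Taking the supremum over the inner witnesses `(u, v)` costs nothing, since
`min a (sSup S) ≤ c` as soon as `min a s ≤ c` for all `s ∈ S` (and `0 ≤ c`, for `S = ∅`).
-/

lemma min_sSup_le {S : Set ℝ} {a c : ℝ} (hc : 0 ≤ c) (h : ∀ s ∈ S, min a s ≤ c) :
    min a (sSup S) ≤ c := by
  rcases le_or_gt a c with hac | hca
  · exact min_le_of_left_le hac
  refine min_le_of_right_le (Real.sSup_le (fun s hs => ?_) hc)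
  exact (min_le_iff.mp (h s hs)).resolve_left hca.not_ge

section extOp

variable {G : ℝ → ℝ → ℝ} {f g : ℝ → ℝ}

lemma extOp_le {z c : ℝ} (hc : 0 ≤ c)
    (h : ∀ x ∈ Icc (0:ℝ) 1, ∀ y ∈ Icc (0:ℝ) 1, G x y = z → min (f x) (g y) ≤ c) :
    extOp G f g z ≤ c :=
  Real.sSup_le (by rintro r ⟨x, hx, y, hy, hxy, rfl⟩; exact h x hx y hy hxy) hc

lemma min_extOp_le {a w c : ℝ} (hc : 0 ≤ c)
    (h : ∀ x ∈ Icc (0:ℝ) 1, ∀ y ∈ Icc (0:ℝ) 1, G x y = w → min a (min (f x) (g y)) ≤ c) :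
    min a (extOp G f g w) ≤ c :=
  min_sSup_le hc (by rintro s ⟨x, hx, y, hy, hxy, rfl⟩; exact h x hx y hy hxy)

variable (G)

lemma le_extOp (hf : IsFTV f) {x y : ℝ} (hx : x ∈ Icc (0:ℝ) 1) (hy : y ∈ Icc (0:ℝ) 1) :
    min (f x) (g y) ≤ extOp G f g (G x y) := by
  refine le_csSup ⟨1, ?_⟩ ⟨x, hx, y, hy, rfl, rfl⟩
  rintro r ⟨x', hx', y', -, -, rfl⟩
  exact min_le_of_left_le (hf x' hx').2

lemma extOp_nonneg (hf : IsFTV f) (hg : IsFTV g) (z : ℝ) : 0 ≤ extOp G f g z :=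
  Real.sSup_nonneg (by rintro r ⟨x, hx, y, hy, -, rfl⟩; exact le_min (hf x hx).1 (hg y hy).1)

lemma IsFTV.extOp (hf : IsFTV f) (hg : IsFTV g) : IsFTV (extOp G f g) := fun z _ =>
  ⟨extOp_nonneg G hf hg z, extOp_le zero_le_one fun x hx _ _ _ => min_le_of_left_le (hf x hx).2⟩

end extOp

lemma min_le_extOp_extOp_distrib {F H : ℝ → ℝ → ℝ} (hFmap : MapsI F)
    (hdist : ∀ x ∈ Icc (0:ℝ) 1, ∀ u ∈ Icc (0:ℝ) 1, ∀ v ∈ Icc (0:ℝ) 1,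
      F x (H u v) = H (F x u) (F x v))
    {f g h : ℝ → ℝ} (hf : IsFTV f) (hg : IsFTV g) {x u v : ℝ}
    (hx : x ∈ Icc (0:ℝ) 1) (hu : u ∈ Icc (0:ℝ) 1) (hv : v ∈ Icc (0:ℝ) 1) :
    min (f x) (min (g u) (h v)) ≤ extOp H (extOp F f g) (extOp F f h) (F x (H u v)) := by
  rw [hdist x hx u hu v hv]
  calc min (f x) (min (g u) (h v)) = min (min (f x) (g u)) (min (f x) (h v)) :=
        inf_inf_distrib_left _ _ _
    _ ≤ min (extOp F f g (F x u)) (extOp F f h (F x v)) :=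
        min_le_min (le_extOp F hf hx hu) (le_extOp F hf hx hv)
    _ ≤ extOp H (extOp F f g) (extOp F f h) (H (F x u) (F x v)) :=
        le_extOp H (hf.extOp F hg) (hFmap x hx u hu) (hFmap x hx v hv)

theorem extOp_distrib_le_general (F H : ℝ → ℝ → ℝ)
    (hFmap : MapsI F)
    (hdist : ∀ x ∈ Icc (0:ℝ) 1, ∀ u ∈ Icc (0:ℝ) 1, ∀ v ∈ Icc (0:ℝ) 1,
      F x (H u v) = H (F x u) (F x v))
    (f g h : ℝ → ℝ) (hf : IsFTV f) (hg : IsFTV g) (hh : IsFTV h) :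
    ∀ z ∈ Icc (0:ℝ) 1,
      extOp F f (extOp H g h) z ≤ extOp H (extOp F f g) (extOp F f h) z := by
  intro z _
  have hRHS_nonneg := extOp_nonneg H (hf.extOp F hg) (hf.extOp F hh) z
  refine extOp_le hRHS_nonneg ?_
  rintro x hx w - rfl
  refine min_extOp_le hRHS_nonneg ?_
  rintro u hu v hv rfl
  exact min_le_extOp_extOp_distrib hFmap hdist hf hg hx hu hv

/-- If `F` distributes over `H` on `[0,1]`, then pointwise
`f ⊙_F (g ⊙_H h) ≤ (f ⊙_F g) ⊙_H (f ⊙_F h)`. -/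
theorem extOp_distrib_le (F H : ℝ → ℝ → ℝ)
    (hFmap : MapsI F) (hHmap : MapsI H)
    (hdist : ∀ x ∈ Icc (0:ℝ) 1, ∀ u ∈ Icc (0:ℝ) 1, ∀ v ∈ Icc (0:ℝ) 1,
      F x (H u v) = H (F x u) (F x v))
    (f g h : ℝ → ℝ) (hf : IsFTV f) (hg : IsFTV g) (hh : IsFTV h) :
    ∀ z ∈ Icc (0:ℝ) 1,
      extOp F f (extOp H g h) z ≤ extOp H (extOp F f g) (extOp F f h) z :=
  extOp_distrib_le_general F H hFmap hdist f g h hf hg hh
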